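/- Let (L, •, N) be an irreducible NIM-rep of the fusion ring GLM(Γ, δ) whose Γ-action has exactly two orbits M¹ and M². Then: (a) for every ℓ ∈ M¹ and ℓ' ∈ L with N_{0̄}(ℓ, ℓ') > 0, one has ℓ' ∈ M² (and symmetrically with M¹ and M² exchanged); and (b) the number of 2Γ-orbits contained in M¹ equals the number of 2Γ-orbits contained in M². -/
import Mathlib


open scoped BigOperators

/-- The subgroup `2Γ = {g + g : g ∈ Γ}` of an additive abelian group `Γ`. -/
def twoG (Γ : Type*) [AddCommGroup Γ] : AddSubgroup Γ :=
  (zsmulAddGroupHom 2 : Γ →+ Γ).range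

/-- A NIM-rep of the fusion ring `GLM(Γ, δ)`: a finite set `L` with a `Γ`-action
together with multiplicity functions `N x : L → L → ℕ` for `x ∈ Γ/2Γ`, satisfying
the axioms coming from the fusion rules. -/
structure GLMNimRep (Γ : Type*) [AddCommGroup Γ] [Fintype Γ] (δ : Γ ⧸ twoG Γ)
    (L : Type*) [Fintype L] [AddAction Γ L] where
  N : (Γ ⧸ twoG Γ) → L → L → ℕ
  vadd_left : ∀ (g : Γ) (x : Γ ⧸ twoG Γ) (ℓ ℓ' : L),
    N x (g +ᵥ ℓ) ℓ' = N (x + QuotientAddGroup.mk g) ℓ ℓ'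
  vadd_right : ∀ (g : Γ) (x : Γ ⧸ twoG Γ) (ℓ ℓ' : L),
    N x ℓ (g +ᵥ ℓ') = N (x + QuotientAddGroup.mk g) ℓ ℓ'
  dual_symm : ∀ (x : Γ ⧸ twoG Γ) (ℓ ℓ' : L), N x ℓ ℓ' = N (x + δ) ℓ' ℓ
  fusion : ∀ (x y : Γ ⧸ twoG Γ) (ℓ ℓ' : L),
    ∑ t : L, N y ℓ t * N x t ℓ' =
      Nat.card {s : Γ //
        (QuotientAddGroup.mk s : Γ ⧸ twoG Γ) = δ + x + y ∧ s +ᵥ ℓ = ℓ'}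

/-- Irreducibility of a NIM-rep of `GLM(Γ, δ)`: the only nonempty subset closed
under the `Γ`-action and under the supports of all `N x` is the whole set. -/
def GLMNimRep.Irreducible {Γ : Type*} [AddCommGroup Γ] [Fintype Γ] {δ : Γ ⧸ twoG Γ}
    {L : Type*} [Fintype L] [AddAction Γ L] (M : GLMNimRep Γ δ L) : Prop :=
  ∀ S : Set L, S.Nonempty →
    (∀ (g : Γ) (ℓ : L), ℓ ∈ S → g +ᵥ ℓ ∈ S) →
    (∀ (x : Γ ⧸ twoG Γ) (ℓ ℓ' : L), ℓ ∈ S → 0 < M.N x ℓ ℓ' → ℓ' ∈ S) →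
    S = Set.univ

/-- `ℓ` and `ℓ'` lie in the same `Γ`-orbit. -/
def sameGOrbit (Γ : Type*) [AddCommGroup Γ] {L : Type*} [AddAction Γ L]
    (ℓ ℓ' : L) : Prop :=
  ∃ g : Γ, g +ᵥ ℓ = ℓ'

/-- `ℓ` and `ℓ'` lie in the same `2Γ`-orbit (orbit of the restricted action). -/
def sameTwoOrbit (Γ : Type*) [AddCommGroup Γ] {L : Type*} [AddAction Γ L]
    (ℓ ℓ' : L) : Prop :=
  ∃ g ∈ twoG Γ, g +ᵥ ℓ = ℓ'

/-- The equivalence relation on `L` whose classes are the `2Γ`-orbits. -/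
def twoOrbSetoid (Γ : Type*) [AddCommGroup Γ] (L : Type*) [AddAction Γ L] :
    Setoid L where
  r := sameTwoOrbit Γ
  iseqv := by
    refine ⟨fun ℓ => ⟨0, (twoG Γ).zero_mem, by simp⟩, ?_, ?_⟩
    · rintro a b ⟨g, hg, rfl⟩
      exact ⟨-g, neg_mem hg, by rw [← add_vadd]; simp⟩
    · rintro a b c ⟨g, hg, rfl⟩ ⟨h, hh, rfl⟩
      exact ⟨h + g, add_mem hh hg, (add_vadd h g a).symm ▸ rfl⟩

/-- The set of `2Γ`-orbits of `L`. -/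
abbrev TwoOrbits (Γ : Type*) [AddCommGroup Γ] (L : Type*) [AddAction Γ L] :=
  Quotient (twoOrbSetoid Γ L)

/-- The action of `g ∈ Γ` on the set of `2Γ`-orbits, `O ↦ g • O`. -/
def orbVAdd {Γ : Type*} [AddCommGroup Γ] {L : Type*} [AddAction Γ L] (g : Γ) :
    TwoOrbits Γ L → TwoOrbits Γ L :=
  Quotient.map (fun ℓ => g +ᵥ ℓ)
    (by
      rintro a b ⟨h, hh, rfl⟩
      exact ⟨h, hh, by
        show h +ᵥ (g +ᵥ a) = g +ᵥ (h +ᵥ a)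
        rw [← add_vadd, ← add_vadd, add_comm]⟩)

section Aux

variable {Γ : Type*} [AddCommGroup Γ] [Fintype Γ] {δ : Γ ⧸ twoG Γ}
  {L : Type*} [Fintype L] [AddAction Γ L] (M : GLMNimRep Γ δ L)

lemma quot_add_self (x : Γ ⧸ twoG Γ) : x + x = 0 := by
  induction x using QuotientAddGroup.induction_on with
  | H g =>
    rw [← QuotientAddGroup.mk_add]
    exact (QuotientAddGroup.eq_zero_iff _).2 ⟨g, by simp [zsmulAddGroupHom, two_zsmul]⟩

lemma sameG_symm {a b : L} (h : sameGOrbit Γ a b) : sameGOrbit Γ b a := by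
  obtain ⟨g, rfl⟩ := h
  exact ⟨-g, by rw [← add_vadd]; simp⟩

lemma sameG_trans {a b c : L} (h : sameGOrbit Γ a b) (h' : sameGOrbit Γ b c) :
    sameGOrbit Γ a c := by
  obtain ⟨g, rfl⟩ := h; obtain ⟨h, rfl⟩ := h'
  exact ⟨h + g, add_vadd h g a⟩

/-- Column inner products of `N x` count `2Γ`-translations. -/
lemma col_inner (x : Γ ⧸ twoG Γ) (a b : L) :
    ∑ t : L, M.N x t a * M.N x t b =
      Nat.card {s : Γ // (QuotientAddGroup.mk s : Γ ⧸ twoG Γ) = 0 ∧ s +ᵥ a = b} := by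
  have h := M.fusion x (x + δ) a b
  have hx : δ + x + (x + δ) = 0 := by
    have : δ + x + (x + δ) = (δ + δ) + (x + x) := by abel
    rw [this, quot_add_self, quot_add_self, add_zero]
  rw [hx] at h
  rw [← h]
  refine Finset.sum_congr rfl fun t _ => ?_
  have : M.N (x + δ) a t = M.N x t a := by
    rw [M.dual_symm (x + δ) a t]
    congr 1
    rw [add_assoc, quot_add_self, add_zero]
  rw [this]

/-- Each column of `N x` is nonempty. -/
lemma col_nonempty (x : Γ ⧸ twoG Γ) (a : L) : ∃ t : L, 0 < M.N x t a := by
  have h := col_inner M x a a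
  have hpos : 0 < Nat.card {s : Γ // (QuotientAddGroup.mk s : Γ ⧸ twoG Γ) = 0 ∧ s +ᵥ a = a} :=
    Nat.card_pos_iff.2 ⟨⟨⟨0, by simp, by simp⟩⟩, inferInstance⟩
  rw [← h] at hpos
  by_contra hc
  push_neg at hc
  have hz : ∑ t : L, M.N x t a * M.N x t a = 0 :=
    Finset.sum_eq_zero fun t _ => by simp [Nat.le_zero.1 (hc t)]
  rw [hz] at hpos
  exact lt_irrefl 0 hpos

/-- Each row of `N x` is nonempty. -/
lemma row_nonempty (x : Γ ⧸ twoG Γ) (a : L) : ∃ t : L, 0 < M.N x a t := by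
  obtain ⟨t, ht⟩ := col_nonempty M (x + δ) a
  exact ⟨t, by rwa [M.dual_symm x a t]⟩

/-- Two positive entries in the same row (same `x`) have second indices in the
same `2Γ`-orbit. -/
lemma row_support (x : Γ ⧸ twoG Γ) {t a b : L}
    (ha : 0 < M.N x t a) (hb : 0 < M.N x t b) : sameTwoOrbit Γ a b := by
  have h := col_inner M x a b
  have hpos : 0 < ∑ t' : L, M.N x t' a * M.N x t' b :=
    Finset.sum_pos' (fun _ _ => Nat.zero_le _)
      ⟨t, Finset.mem_univ t, Nat.mul_pos ha hb⟩
  rw [h] at hpos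
  obtain ⟨⟨s, hs0, hsv⟩⟩ := Nat.card_pos_iff.1 hpos
  exact ⟨s, (QuotientAddGroup.eq_zero_iff s).1 hs0, hsv⟩

lemma N_zero_vadd_right (g : Γ) (a b : L) :
    M.N 0 a (g +ᵥ b) = M.N (QuotientAddGroup.mk g) a b := by
  rw [M.vadd_right g 0 a b, zero_add]

/-- Entries in row `a` for arbitrary `x` land in the `Γ`-orbit determined by
row `a` at `x = 0`. -/
lemma cross_support {a t : L} (h0 : 0 < M.N 0 a t)
    {x : Γ ⧸ twoG Γ} {b : L} (hb : 0 < M.N x a b) : sameGOrbit Γ t b := by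
  induction x using QuotientAddGroup.induction_on with
  | H g =>
    have hb' : 0 < M.N 0 a (g +ᵥ b) := by rw [N_zero_vadd_right M g a b]; exact hb
    obtain ⟨s, hs, hsv⟩ := row_support M 0 h0 hb'
    refine ⟨-g + s, ?_⟩
    rw [add_vadd, hsv, ← add_vadd, neg_add_cancel, zero_vadd]

/-- If rows starting in the orbit of `ℓ₁` could hit the orbit of `ℓ₁` itself,
irreducibility would force a single orbit; hence they land in the orbit of `ℓ₂`. -/
lemma partA (hirr : M.Irreducible) (ℓ₁ ℓ₂ : L) (hne : ¬ sameGOrbit Γ ℓ₁ ℓ₂)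
    (hcov : ∀ ℓ : L, sameGOrbit Γ ℓ₁ ℓ ∨ sameGOrbit Γ ℓ₂ ℓ) :
    ∀ ℓ ℓ' : L, sameGOrbit Γ ℓ₁ ℓ → 0 < M.N 0 ℓ ℓ' → sameGOrbit Γ ℓ₂ ℓ' := by
  intro ℓ ℓ' hℓ hpos
  rcases hcov ℓ' with h' | h'
  · -- derive a contradiction
    exfalso
    apply hne
    have hS : {m : L | sameGOrbit Γ ℓ₁ m} = Set.univ := by
      apply hirr
      · exact ⟨ℓ₁, ⟨0, zero_vadd Γ ℓ₁⟩⟩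
      · intro g m hm
        exact sameG_trans hm ⟨g, rfl⟩
      · intro x m b hm hb
        obtain ⟨h, rfl⟩ := sameG_trans (sameG_symm hℓ) hm
        rw [M.vadd_left h x ℓ b] at hb
        have := cross_support M hpos hb
        exact sameG_trans h' this
    have : ℓ₂ ∈ {m : L | sameGOrbit Γ ℓ₁ m} := hS ▸ Set.mem_univ ℓ₂
    exact this
  · exact h'

/-- The `2Γ`-orbits in the orbit of `ℓ₂` are at most as many as those
in the orbit of `ℓ₁`. -/
lemma partB_le (hirr : M.Irreducible) (ℓ₁ ℓ₂ : L) (hne : ¬ sameGOrbit Γ ℓ₁ ℓ₂)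
    (hcov : ∀ ℓ : L, sameGOrbit Γ ℓ₁ ℓ ∨ sameGOrbit Γ ℓ₂ ℓ) :
    Nat.card {O : TwoOrbits Γ L //
        ∃ ℓ : L, Quotient.mk (twoOrbSetoid Γ L) ℓ = O ∧ sameGOrbit Γ ℓ₂ ℓ} ≤
      Nat.card {O : TwoOrbits Γ L //
        ∃ ℓ : L, Quotient.mk (twoOrbSetoid Γ L) ℓ = O ∧ sameGOrbit Γ ℓ₁ ℓ} := by
  classical
  have hA := partA M hirr ℓ₁ ℓ₂ hne hcov
  have hA' := partA M hirr ℓ₂ ℓ₁ (fun h => hne (sameG_symm h))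
    (fun ℓ => (hcov ℓ).symm)
  -- the function on L picking a 2Γ-orbit in the support of row ℓ of N 0
  set g : L → TwoOrbits Γ L :=
    fun ℓ => Quotient.mk (twoOrbSetoid Γ L) (Classical.choose (row_nonempty M 0 ℓ)) with hg
  have hgspec : ∀ ℓ : L, 0 < M.N 0 ℓ (Classical.choose (row_nonempty M 0 ℓ)) :=
    fun ℓ => Classical.choose_spec (row_nonempty M 0 ℓ)
  have hgconst : ∀ a b : L, sameTwoOrbit Γ a b → g a = g b := by
    rintro a b ⟨s, hs, rfl⟩
    have hb : 0 < M.N 0 a (Classical.choose (row_nonempty M 0 (s +ᵥ a))) := by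
      have := hgspec (s +ᵥ a)
      rwa [M.vadd_left s 0 a, zero_add, (QuotientAddGroup.eq_zero_iff s).2 hs] at this
    exact Quotient.sound (row_support M 0 (hgspec a) hb)
  have hgmk : ∀ a b : L, 0 < M.N 0 a b → g a = Quotient.mk (twoOrbSetoid Γ L) b :=
    fun a b hb => Quotient.sound (row_support M 0 (hgspec a) hb)
  -- lift to the quotient
  set ghat : TwoOrbits Γ L → TwoOrbits Γ L := Quotient.lift g hgconst with hghat
  -- the map from the orbits in M¹ to the orbits in M²
  have hmem : ∀ O : {O : TwoOrbits Γ L //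
      ∃ ℓ : L, Quotient.mk (twoOrbSetoid Γ L) ℓ = O ∧ sameGOrbit Γ ℓ₁ ℓ},
      ∃ ℓ : L, Quotient.mk (twoOrbSetoid Γ L) ℓ = ghat O.1 ∧ sameGOrbit Γ ℓ₂ ℓ := by
    rintro ⟨O, ℓ, rfl, hℓ⟩
    refine ⟨Classical.choose (row_nonempty M 0 ℓ), rfl, hA ℓ _ hℓ (hgspec ℓ)⟩
  set F : {O : TwoOrbits Γ L //
      ∃ ℓ : L, Quotient.mk (twoOrbSetoid Γ L) ℓ = O ∧ sameGOrbit Γ ℓ₁ ℓ} →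
      {O : TwoOrbits Γ L //
      ∃ ℓ : L, Quotient.mk (twoOrbSetoid Γ L) ℓ = O ∧ sameGOrbit Γ ℓ₂ ℓ} :=
    fun O => ⟨ghat O.1, hmem O⟩ with hF
  have hFsurj : Function.Surjective F := by
    rintro ⟨O', m, rfl, hm⟩
    obtain ⟨ℓ, hℓm⟩ := col_nonempty M 0 m
    have hℓ1 : sameGOrbit Γ ℓ₁ ℓ := by
      rcases hcov ℓ with h | h
      · exact h
      · exact absurd (sameG_trans (hA' ℓ m h hℓm) (sameG_symm hm)) hne
    refine ⟨⟨Quotient.mk (twoOrbSetoid Γ L) ℓ, ℓ, rfl, hℓ1⟩, ?_⟩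
    apply Subtype.ext
    show ghat (Quotient.mk (twoOrbSetoid Γ L) ℓ) = Quotient.mk (twoOrbSetoid Γ L) m
    exact hgmk ℓ m hℓm
  exact Nat.card_le_card_of_surjective F hFsurj

end Aux

/-- if an irreducible NIM-rep of `GLM(Γ, δ)` has exactly two `Γ`-orbits
(the orbits of `ℓ₁` and of `ℓ₂`), then `X_{0̄}` exchanges the two `Γ`-orbits, and the
two `Γ`-orbits contain the same number of `2Γ`-orbits. -/
theorem stmt13 (Γ : Type*) [AddCommGroup Γ] [Fintype Γ] (hΓ : Even (Fintype.card Γ))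
    (δ : Γ ⧸ twoG Γ) (L : Type*) [Fintype L] [Nonempty L] [AddAction Γ L]
    (M : GLMNimRep Γ δ L) (hirr : M.Irreducible)
    (ℓ₁ ℓ₂ : L) (hne : ¬ sameGOrbit Γ ℓ₁ ℓ₂)
    (hcov : ∀ ℓ : L, sameGOrbit Γ ℓ₁ ℓ ∨ sameGOrbit Γ ℓ₂ ℓ) :
    (∀ ℓ ℓ' : L, sameGOrbit Γ ℓ₁ ℓ → 0 < M.N 0 ℓ ℓ' → sameGOrbit Γ ℓ₂ ℓ') ∧
    (∀ ℓ ℓ' : L, sameGOrbit Γ ℓ₂ ℓ → 0 < M.N 0 ℓ ℓ' → sameGOrbit Γ ℓ₁ ℓ') ∧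
    Nat.card {O : TwoOrbits Γ L //
        ∃ ℓ : L, Quotient.mk (twoOrbSetoid Γ L) ℓ = O ∧ sameGOrbit Γ ℓ₁ ℓ} =
      Nat.card {O : TwoOrbits Γ L //
        ∃ ℓ : L, Quotient.mk (twoOrbSetoid Γ L) ℓ = O ∧ sameGOrbit Γ ℓ₂ ℓ} := by
  refine ⟨partA M hirr ℓ₁ ℓ₂ hne hcov,
    partA M hirr ℓ₂ ℓ₁ (fun h => hne (sameG_symm h)) (fun ℓ => (hcov ℓ).symm), ?_⟩
  exact le_antisymm
    (partB_le M hirr ℓ₂ ℓ₁ (fun h => hne (sameG_symm h)) (fun ℓ => (hcov ℓ).symm))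
    (partB_le M hirr ℓ₁ ℓ₂ hne hcov)
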